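/- Positivity of ∂λ₂/∂w₁ (core claim of Lemma 3.2). Let z = (z₁, z₂) ∈ Ω and suppose w₁, w₂ : Ω → ℝ are differentiable at z with ∇w₁(z) · r₁(z) = 0, ∇w₂(z) · r₂(z) = 0, ∂w₁/∂z₁(z) > 0 and ∂w₂/∂z₁(z) < 0. Then the gradient of λ₂ at z decomposes as ∇λ₂(z) = a ∇w₁(z) + b ∇w₂(z) for some real numbers a, b with a = (z₂ + √(z₂² + 4z₁)) / ( ∂w₁/∂z₁(z) · (z₂² + 4z₁) ); in particular a > 0. -/

import Mathlib

/-- The half-plane `Ω = {(z₁,z₂) ∈ ℝ² : z₁ > 0}`. -/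
def Omega : Set (ℝ × ℝ) := {z : ℝ × ℝ | 0 < z.1}

/-- The eigenvalue `λ₁(z₁,z₂) = (z₂ − √(z₂² + 4z₁))/2` of `[[z₂, z₁],[1,0]]`. -/
noncomputable def lam1 (z : ℝ × ℝ) : ℝ := (z.2 - Real.sqrt (z.2 ^ 2 + 4 * z.1)) / 2

/-- The eigenvalue `λ₂(z₁,z₂) = (z₂ + √(z₂² + 4z₁))/2` of `[[z₂, z₁],[1,0]]`. -/
noncomputable def lam2 (z : ℝ × ℝ) : ℝ := (z.2 + Real.sqrt (z.2 ^ 2 + 4 * z.1)) / 2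

/-!
A linear form on `ℝ²` vanishing on `(μ, 1)` is a multiple of `(x, y) ↦ x - μ y`, so
`∇wᵢ = αᵢ (dz₁ - λᵢ dz₂)` with `αᵢ = ∂wᵢ/∂z₁`. Differentiating `λ₂` gives
`∇λ₂ = (dz₁ + λ₂ dz₂) / √(z₂² + 4z₁)`, and since `λ₂ - λ₁ = √(z₂² + 4z₁) ≠ 0` the two gradients are
independent. Solving the resulting `2 × 2` system gives `a = 2λ₂ / (α₁ (z₂² + 4z₁))` and
`b = -z₂ / (α₂ (z₂² + 4z₁))`; finally `a > 0` because `√(z₂² + 4z₁) > |z₂|`.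
-/

theorem ContinuousLinearMap.eq_smul_fst_sub_smul_snd_of_apply_eq_zero {𝕜 : Type*} [CommRing 𝕜]
    [TopologicalSpace 𝕜] [IsTopologicalRing 𝕜] {ℓ : 𝕜 × 𝕜 →L[𝕜] 𝕜} {μ : 𝕜}
    (h : ℓ (μ, 1) = 0) :
    ℓ = ℓ (1, 0) • (fst 𝕜 𝕜 𝕜 - μ • snd 𝕜 𝕜 𝕜) := by
  refine ContinuousLinearMap.ext fun ⟨x, y⟩ => ?_
  have hxy : ((x, y) : 𝕜 × 𝕜) = (x - μ * y) • ((1 : 𝕜), (0 : 𝕜)) + y • (μ, 1) := by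
    ext <;> simp only [Prod.smul_mk, smul_eq_mul, mul_one, mul_zero, Prod.mk_add_mk, zero_add]
    ring
  rw [hxy, map_add, map_smul, map_smul, h]
  simp [mul_comm]

theorem add_sqrt_sq_add_pos (x : ℝ) {y : ℝ} (hy : 0 < y) : 0 < x + √(x ^ 2 + y) :=
  calc 0 ≤ x + |x| := by linarith [neg_abs_le x]
    _ = x + √(x ^ 2) := by rw [Real.sqrt_sq_eq_abs]
    _ < x + √(x ^ 2 + y) := by gcongr; linarith

theorem hasFDerivAt_lam2 {z : ℝ × ℝ} (hz : 0 < z.2 ^ 2 + 4 * z.1) :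
    HasFDerivAt lam2
      ((√(z.2 ^ 2 + 4 * z.1))⁻¹ •
        (ContinuousLinearMap.fst ℝ ℝ ℝ + lam2 z • ContinuousLinearMap.snd ℝ ℝ ℝ)) z := by
  have hD := ((hasFDerivAt_snd (𝕜 := ℝ) (p := z)).pow 2).add
    ((hasFDerivAt_fst (𝕜 := ℝ) (p := z)).const_mul (4 : ℝ))
  have hlam2 : lam2 = fun p => (p.2 + √(p.2 ^ 2 + 4 * p.1)) * 2⁻¹ := by
    funext p
    rw [lam2, div_eq_mul_inv]
  rw [hlam2]
  refine (((hasFDerivAt_snd (p := z)).add (hD.sqrt hz.ne')).mul_const (2⁻¹ : ℝ)).congr_fderiv ?_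
  refine ContinuousLinearMap.ext fun v => ?_
  simp only [Pi.add_apply, nsmul_eq_mul, add_apply, smul_apply, ContinuousLinearMap.coe_fst',
    ContinuousLinearMap.coe_snd', smul_eq_mul]
  field_simp
  ring

theorem dlam2_dw1_pos_general
    (z : ℝ × ℝ) (hz : z ∈ Omega) (w₁ w₂ : ℝ × ℝ → ℝ)
    (hr₁ : fderiv ℝ w₁ z (lam1 z, 1) = 0)
    (hr₂ : fderiv ℝ w₂ z (lam2 z, 1) = 0)
    (hpos : 0 < fderiv ℝ w₁ z ((1 : ℝ), (0 : ℝ)))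
    (hneg : fderiv ℝ w₂ z ((1 : ℝ), (0 : ℝ)) < 0) :
    ∃ a b : ℝ,
      fderiv ℝ lam2 z = a • fderiv ℝ w₁ z + b • fderiv ℝ w₂ z ∧
      a = (z.2 + Real.sqrt (z.2 ^ 2 + 4 * z.1)) /
        (fderiv ℝ w₁ z ((1 : ℝ), (0 : ℝ)) * (z.2 ^ 2 + 4 * z.1)) ∧
      0 < a := by
  have hz₁ : 0 < 4 * z.1 := by have : 0 < z.1 := hz; positivity
  have hdisc : 0 < z.2 ^ 2 + 4 * z.1 := by positivity
  have h₁ := ContinuousLinearMap.eq_smul_fst_sub_smul_snd_of_apply_eq_zero hr₁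
  have h₂ := ContinuousLinearMap.eq_smul_fst_sub_smul_snd_of_apply_eq_zero hr₂
  set α₁ := fderiv ℝ w₁ z ((1 : ℝ), (0 : ℝ))
  set α₂ := fderiv ℝ w₂ z ((1 : ℝ), (0 : ℝ))
  refine ⟨_, -z.2 / (α₂ * (z.2 ^ 2 + 4 * z.1)), ?_, rfl,
    div_pos (add_sqrt_sq_add_pos _ hz₁) (mul_pos hpos hdisc)⟩
  rw [(hasFDerivAt_lam2 hdisc).fderiv, h₁, h₂]
  have hs2 : √(z.2 ^ 2 + 4 * z.1) ^ 2 = z.2 ^ 2 + 4 * z.1 := Real.sq_sqrt hdisc.le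
  have hα₂ : α₂ ≠ 0 := hneg.ne
  refine ContinuousLinearMap.ext fun v => ?_
  simp only [lam1, lam2, add_apply, sub_apply, smul_apply, ContinuousLinearMap.coe_fst',
    ContinuousLinearMap.coe_snd', smul_eq_mul]
  field_simp
  linear_combination -(2 * v.1 + (z.2 + √(z.2 ^ 2 + 4 * z.1)) * v.2) * hs2

/-- **Core claim of Lemma 3.2** (Positivity of `∂λ₂/∂w₁`). In Riemann-invariant coordinates,
`∇λ₂ = a ∇w₁ + b ∇w₂` with
`a = (z₂ + √(z₂² + 4z₁)) / (∂w₁/∂z₁ · (z₂² + 4z₁)) > 0`. -/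
theorem dlam2_dw1_pos
    (z : ℝ × ℝ) (hz : z ∈ Omega) (w₁ w₂ : ℝ × ℝ → ℝ)
    (hw₁ : DifferentiableAt ℝ w₁ z) (hw₂ : DifferentiableAt ℝ w₂ z)
    (hr₁ : fderiv ℝ w₁ z (lam1 z, 1) = 0)
    (hr₂ : fderiv ℝ w₂ z (lam2 z, 1) = 0)
    (hpos : 0 < fderiv ℝ w₁ z ((1 : ℝ), (0 : ℝ)))
    (hneg : fderiv ℝ w₂ z ((1 : ℝ), (0 : ℝ)) < 0) :
    ∃ a b : ℝ,
      fderiv ℝ lam2 z = a • fderiv ℝ w₁ z + b • fderiv ℝ w₂ z ∧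
      a = (z.2 + Real.sqrt (z.2 ^ 2 + 4 * z.1)) /
        (fderiv ℝ w₁ z ((1 : ℝ), (0 : ℝ)) * (z.2 ^ 2 + 4 * z.1)) ∧
      0 < a :=
  dlam2_dw1_pos_general z hz w₁ w₂ hr₁ hr₂ hpos hneg
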